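/- Let 𝒲 = {ρ(x,s) : x ∈ 𝒳, s ∈ 𝒮} be an arbitrarily varying classical-quantum channel on ℂ^d, let P_X be a probability distribution on 𝒳 with rational values, and set C := inf_Q χ(P_X; ρ̄̄_Q), the infimum over all stochastic matrices Q : 𝒳 → 𝒮. For every ν > 0 and ξ > 0 there exists N ∈ ℕ such that the following holds for every n ≥ N with nP_X(x) ∈ ℕ for all x: if {𝒫(x') : x' ∈ 𝒯^n_X} is a family of orthogonal projections on (ℂ^d)^{⊗n} such that (a) the value tr[ ρ^{⊗n}(x,s) 𝒫(x') ] depends only on the joint empirical distribution of the triple (x, x', s) ∈ 𝒳^n × 𝒳^n × 𝒮^n, and (b) for every stochastic matrix Q : 𝒳 → 𝒮 and every x' ∈ 𝒯^n_X one has tr[ ( ∑_{x∈𝒳} P_X(x) ρ̄̄_Q(x) )^{⊗n} · 𝒫(x') ] < 2^{−n(C − ν)}, then for every x ∈ 𝒯^n_X and every s ∈ 𝒮^n: (1/|𝒯^n_X|) ∑_{x' ∈ 𝒯^n_X} tr[ ρ^{⊗n}(x,s) · 𝒫(x') ] < 2^{−n(C − ν − ξ)}. -/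

import Mathlib

/-
Write `z = (x, s)` for the sequence of input–state pairs. Because of (a), averaging
`tr[ρ^{⊗n}(x,s) 𝒫(x')]` over the type class of `x`, i.e. over the permutations `x'` of `x`, is
the same as averaging `tr[ρ^{⊗n}(g) 𝒫(x)]` over the permutations `g` of `z`. Choose `Q` as the
conditional empirical distribution of `s` given `x`: then `∑ₐ P(a) ρ̄̄_Q(a)` is the mixture of
the `ρ(a,c)` weighted by the joint type of `z`, and its `n`-th tensor power is an i.i.d. mixture
of the `ρ^{⊗n}(g)` that gives every `g` in the type class of `z` the same weight, and the whole
class weight at least `(e (n + 1))^{-|𝒳||𝒮|}` (Stirling). As all the traces are nonnegative, the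
average is at most `(e (n + 1))^{|𝒳||𝒮|}` times the trace bounded in (b), and this polynomial
factor is eventually below `2^{nξ}`.
-/

open scoped BigOperators
open Classical
open scoped ComplexOrder

noncomputable section

/-- Number of occurrences of the symbol `a` in the sequence `x`. -/
def occ {𝒳 : Type*} [Fintype 𝒳] [DecidableEq 𝒳] {n : ℕ} (x : Fin n → 𝒳) (a : 𝒳) : ℕ :=
  (Finset.univ.filter fun t => x t = a).card

/-- The type class `𝒯^n_X` of the (rational) type `P`. -/
def typeClass {𝒳 : Type*} [Fintype 𝒳] [DecidableEq 𝒳] (P : 𝒳 → ℝ) (n : ℕ) :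
    Finset (Fin n → 𝒳) :=
  Finset.univ.filter fun x => ∀ a : 𝒳, (occ x a : ℝ) = n * P a

/-- A density operator: positive semidefinite with unit trace. -/
def IsDensityOperator {d : ℕ} (ρ : Matrix (Fin d) (Fin d) ℂ) : Prop :=
  ρ.PosSemidef ∧ ρ.trace = 1

/-- `n`-fold Kronecker (tensor) product. -/
def tensorPow {d : ℕ} (n : ℕ) (M : Fin n → Matrix (Fin d) (Fin d) ℂ) :
    Matrix (Fin n → Fin d) (Fin n → Fin d) ℂ :=
  Matrix.of fun i j => ∏ t, M t (i t) (j t)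

/-- Von Neumann entropy (base 2). -/
def vNEntropy {m : Type*} [Fintype m] [DecidableEq m] (ρ : Matrix m m ℂ) : ℝ :=
  if h : ρ.IsHermitian then -∑ i, h.eigenvalues i * Real.logb 2 (h.eigenvalues i) else 0

/-- Holevo quantity `χ(P;V)`. -/
def holevo {𝒳 m : Type*} [Fintype 𝒳] [Fintype m] [DecidableEq m]
    (P : 𝒳 → ℝ) (V : 𝒳 → Matrix m m ℂ) : ℝ :=
  vNEntropy (∑ x, (P x : ℂ) • V x) - ∑ x, P x * vNEntropy (V x)

/-- Stochastic matrices `Q : 𝒳 → 𝒮` (jamming strategies depending on the input letter). -/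
def StochMat (𝒳 𝒮 : Type*) [Fintype 𝒮] : Type _ :=
  {Q : 𝒳 → 𝒮 → ℝ // (∀ x s, 0 ≤ Q x s) ∧ ∀ x, ∑ s, Q x s = 1}

/-- The averaged cq channel `ρ̄̄_Q(x) = ∑ₛ Q(s|x) ρ(x,s)`. -/
def avgChannel {𝒳 𝒮 : Type*} [Fintype 𝒮] {d : ℕ}
    (ρ : 𝒳 → 𝒮 → Matrix (Fin d) (Fin d) ℂ) (Q : 𝒳 → 𝒮 → ℝ) (x : 𝒳) :
    Matrix (Fin d) (Fin d) ℂ :=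
  ∑ s, (Q x s : ℂ) • ρ x s

/-- `inf_Q χ(P; ρ̄̄_Q)` over all stochastic matrices `Q : 𝒳 → 𝒮`. -/
def infQHolevo {𝒳 𝒮 : Type*} [Fintype 𝒳] [Fintype 𝒮] {d : ℕ}
    (ρ : 𝒳 → 𝒮 → Matrix (Fin d) (Fin d) ℂ) (P : 𝒳 → ℝ) : ℝ :=
  ⨅ Q : StochMat 𝒳 𝒮, holevo P (avgChannel ρ Q.1)

open Finset Filter Asymptotics
open scoped Nat

lemma factorial_mul_exp_le (m : ℕ) : (m ! : ℝ) * Real.exp m ≤ Real.exp 1 * (m + 1) * m ^ m := by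
  rcases Nat.eq_zero_or_pos m with rfl | hm
  · simp
  have hstirling : Stirling.stirlingSeq m ≤ Real.exp 1 / √2 := by
    have := Stirling.stirlingSeq'_antitone (Nat.zero_le (m - 1))
    simp_all [Nat.sub_add_cancel hm]
  have hm' : (0 : ℝ) < m := by exact_mod_cast hm
  rw [Stirling.stirlingSeq, div_le_iff₀ (by positivity), Real.sqrt_mul zero_le_two, div_pow,
    ← Real.exp_nat_mul, mul_one] at hstirling
  have hsqrt : √(m : ℝ) ≤ m + 1 := by
    nlinarith [Real.sq_sqrt hm'.le, Real.sqrt_nonneg (m : ℝ)]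
  calc (m ! : ℝ) * Real.exp m
      ≤ Real.exp 1 / √2 * (√2 * √m * (m ^ m / Real.exp m)) * Real.exp m := by gcongr
    _ = Real.exp 1 * √m * m ^ m := by field_simp
    _ ≤ Real.exp 1 * (m + 1) * m ^ m := by gcongr

lemma eventually_mul_add_one_pow_lt (c : ℝ) (k : ℕ) {ξ : ℝ} (hξ : 0 < ξ) :
    ∀ᶠ n : ℕ in atTop, (c * (n + 1)) ^ k < (2 : ℝ) ^ ((n : ℝ) * ξ) := by
  have hr : 1 < (2 : ℝ) ^ ξ := Real.one_lt_rpow one_lt_two hξ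
  have hpoly : (fun n : ℕ => (c * (n + 1)) ^ k) =o[atTop] fun n => ((2 : ℝ) ^ ξ) ^ n := by
    have := ((isLittleO_pow_const_const_pow_of_one_lt k hr).comp_tendsto
      (tendsto_add_atTop_nat 1)).const_mul_left (c ^ k)
    refine (this.trans_isBigO ?_).congr_left fun n => ?_
    · simpa [Function.comp_def, pow_succ'] using
        isBigO_const_mul_self ((2 : ℝ) ^ ξ) (fun n : ℕ => ((2 : ℝ) ^ ξ) ^ n) atTop
    · simp [mul_pow]
  filter_upwards [hpoly.def (one_half_pos : (0 : ℝ) < 1 / 2)] with n hn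
  rw [mul_comm (n : ℝ) ξ, Real.rpow_mul zero_le_two, Real.rpow_natCast]
  have hpos : 0 < ((2 : ℝ) ^ ξ) ^ n := by positivity
  calc (c * (n + 1)) ^ k ≤ ‖(c * (n + 1)) ^ k‖ := Real.le_norm_self _
    _ ≤ 1 / 2 * ‖((2 : ℝ) ^ ξ) ^ n‖ := hn
    _ < ((2 : ℝ) ^ ξ) ^ n := by rw [Real.norm_of_nonneg hpos.le]; linarith

def permOrbit {α : Type*} [DecidableEq α] {n : ℕ} (z : Fin n → α) : Finset (Fin n → α) :=
  univ.image fun π : Equiv.Perm (Fin n) => z ∘ π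

section PermOrbit

variable {α : Type*} [Fintype α] [DecidableEq α] {n : ℕ}

lemma occ_comp_perm (z : Fin n → α) (π : Equiv.Perm (Fin n)) (a : α) : occ (z ∘ π) a = occ z a :=
  card_equiv π (by simp)

lemma mem_permOrbit_iff {y z : Fin n → α} : y ∈ permOrbit z ↔ ∀ a, occ y a = occ z a := by
  constructor
  · rintro hy a
    obtain ⟨π, -, rfl⟩ := mem_image.mp hy
    exact occ_comp_perm z π a
  · intro h
    have hfiber : ∀ a, Fintype.card {t // y t = a} = Fintype.card {t // z t = a} := by
      simpa [Fintype.card_subtype, occ] using h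
    refine mem_image.mpr
      ⟨Equiv.ofFiberEquiv fun a => Fintype.equivOfCardEq (hfiber a), mem_univ _, ?_⟩
    funext t
    exact Equiv.ofFiberEquiv_map _ t

lemma card_filter_comp_perm_eq (z : Fin n → α) (σ : Equiv.Perm (Fin n)) :
    #{π : Equiv.Perm (Fin n) | z ∘ π = z ∘ σ} = ∏ a, (occ z a)! := by
  have hstab : #{π : Equiv.Perm (Fin n) | z ∘ π = z} = ∏ a, (occ z a)! := by
    rw [← Fintype.card_subtype, DomMulAct.stabilizer_card]
    simp [Fintype.card_subtype, occ]
  rw [← hstab]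
  refine card_equiv (Equiv.mulRight σ⁻¹) fun π => ?_
  simp only [mem_filter, mem_univ, true_and, Equiv.coe_mulRight, Equiv.Perm.coe_mul]
  constructor <;> intro h <;> funext t
  · simpa using congrFun h (σ⁻¹ t)
  · simpa using congrFun h (σ t)

lemma sum_perm_comp {M : Type*} [AddCommMonoid M] (z : Fin n → α) (F : (Fin n → α) → M) :
    ∑ π : Equiv.Perm (Fin n), F (z ∘ π) = (∏ a, (occ z a)!) • ∑ y ∈ permOrbit z, F y := by
  rw [Finset.sum_comp, smul_sum]
  refine sum_congr rfl ?_
  rintro _ hy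
  obtain ⟨σ, -, rfl⟩ := mem_image.mp hy
  rw [card_filter_comp_perm_eq]

lemma prod_factorial_mul_card_permOrbit (z : Fin n → α) :
    (∏ a, (occ z a)!) * #(permOrbit z) = n ! := by
  simpa [Fintype.card_perm] using (sum_perm_comp z fun _ => (1 : ℕ)).symm

lemma average_permOrbit (z : Fin n → α) (F : (Fin n → α) → ℝ) :
    (∑ y ∈ permOrbit z, F y) / #(permOrbit z) = (∑ π : Equiv.Perm (Fin n), F (z ∘ π)) / n ! := by
  rw [sum_perm_comp, nsmul_eq_mul, ← prod_factorial_mul_card_permOrbit z]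
  push_cast
  rw [mul_div_mul_left]
  exact_mod_cast (prod_pos fun a _ => Nat.factorial_pos _).ne'

lemma average_permOrbit_comm {β γ : Type*} [Fintype β] [DecidableEq β] [Fintype γ]
    [DecidableEq γ] (G : (Fin n → β) → (Fin n → γ) → ℝ)
    (hG : ∀ y u (π : Equiv.Perm (Fin n)), G (y ∘ π) (u ∘ π) = G y u)
    (y : Fin n → β) (u : Fin n → γ) :
    (∑ u' ∈ permOrbit u, G y u') / #(permOrbit u) =
      (∑ y' ∈ permOrbit y, G y' u) / #(permOrbit y) := by
  rw [average_permOrbit, average_permOrbit]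
  congr 1
  refine Fintype.sum_equiv (Equiv.inv _) _ _ fun π => ?_
  rw [Equiv.inv_apply, ← hG (y ∘ ⇑π⁻¹) u π]
  simp [Function.comp_assoc]

lemma typeClass_eq_permOrbit {P : α → ℝ} {x : Fin n → α} (hx : x ∈ typeClass P n) :
    typeClass P n = permOrbit x := by
  simp only [typeClass, mem_filter, mem_univ, true_and] at hx
  ext y
  simp only [typeClass, mem_filter, mem_univ, true_and, mem_permOrbit_iff, ← hx]
  exact ⟨fun h a => by exact_mod_cast h a, fun h a => by rw [h]⟩

lemma prod_comp_eq_prod_pow_occ {M : Type*} [CommMonoid M] (z : Fin n → α) (w : α → M) :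
    ∏ t, w (z t) = ∏ a, w a ^ occ z a := by
  rw [← prod_fiberwise' univ z w]
  exact prod_congr rfl fun a _ => prod_const _

lemma sum_occ (z : Fin n → α) : ∑ a, occ z a = n := by
  simpa [occ] using sum_card_fiberwise_eq_card_filter univ univ z

lemma occ_le (z : Fin n → α) (a : α) : occ z a ≤ n :=
  (card_filter_le _ _).trans_eq (card_fin n)

lemma prod_factorial_mul_exp_le (z : Fin n → α) :
    ∏ a, ((occ z a)! : ℝ) * Real.exp (occ z a) ≤
      (Real.exp 1 * (n + 1)) ^ Fintype.card α * ∏ a, (occ z a : ℝ) ^ occ z a := by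
  calc ∏ a, ((occ z a)! : ℝ) * Real.exp (occ z a)
      ≤ ∏ a, Real.exp 1 * (occ z a + 1) * (occ z a : ℝ) ^ occ z a :=
        prod_le_prod (fun a _ => by positivity) fun a _ => factorial_mul_exp_le _
    _ = (∏ _a : α, Real.exp 1 * (occ z _a + 1)) * ∏ a, (occ z a : ℝ) ^ occ z a :=
        prod_mul_distrib
    _ ≤ (∏ _a : α, Real.exp 1 * (n + 1)) * ∏ a, (occ z a : ℝ) ^ occ z a := by
        gcongr with a
        exact_mod_cast occ_le z a
    _ = (Real.exp 1 * (n + 1)) ^ Fintype.card α * ∏ a, (occ z a : ℝ) ^ occ z a := by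
        rw [prod_const, card_univ]

-- `∏ t, occ z (z t) / n` is the probability of each member of the type class of `z` under the
-- i.i.d. law of the empirical distribution of `z`.
lemma one_le_card_permOrbit_mul_prod (z : Fin n → α) :
    1 ≤ (Real.exp 1 * (n + 1)) ^ Fintype.card α * #(permOrbit z) *
      ∏ t, (occ z (z t) : ℝ) / n := by
  have hprob : ∏ t, (occ z (z t) : ℝ) / n = (∏ a, (occ z a : ℝ) ^ occ z a) / n ^ n := by
    rw [prod_div_distrib, prod_comp_eq_prod_pow_occ z (fun a => (occ z a : ℝ)), prod_const,
      card_univ, Fintype.card_fin]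
  have hexp : ∏ a, Real.exp (occ z a) = Real.exp n := by
    rw [← Real.exp_sum]
    exact_mod_cast congrArg Real.exp (congrArg Nat.cast (sum_occ z))
  have hpow_le : (n : ℝ) ^ n ≤ n ! * Real.exp n := by
    have := Real.pow_div_factorial_le_exp (n : ℝ) (Nat.cast_nonneg n) n
    rwa [div_le_iff₀ (by positivity), mul_comm] at this
  have horbit : (n ! : ℝ) = (∏ a, ((occ z a)! : ℝ)) * #(permOrbit z) := by
    exact_mod_cast (prod_factorial_mul_card_permOrbit z).symm
  have hnn : (0 : ℝ) < n ^ n := by exact_mod_cast Nat.pow_self_pos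
  rw [hprob, mul_div_assoc', le_div_iff₀ hnn, one_mul]
  refine le_of_mul_le_mul_right ?_ (by positivity : 0 < (∏ a, ((occ z a)! : ℝ)) * Real.exp n)
  calc (n : ℝ) ^ n * ((∏ a, ((occ z a)! : ℝ)) * Real.exp n)
      ≤ n ! * Real.exp n * ∏ a, ((occ z a)! : ℝ) * Real.exp (occ z a) := by
        rw [prod_mul_distrib, hexp]
        exact mul_le_mul_of_nonneg_right hpow_le (by positivity)
    _ ≤ n ! * Real.exp n *
          ((Real.exp 1 * (n + 1)) ^ Fintype.card α * ∏ a, (occ z a : ℝ) ^ occ z a) := by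
        gcongr
        exact prod_factorial_mul_exp_le z
    _ = _ := by rw [horbit]; ring

lemma average_permOrbit_le (z : Fin n → α) (f : (Fin n → α) → ℝ) (hf : ∀ g, 0 ≤ f g) :
    (∑ g ∈ permOrbit z, f g) / #(permOrbit z) ≤
      (Real.exp 1 * (n + 1)) ^ Fintype.card α * ∑ g, (∏ t, (occ z (g t) : ℝ) / n) * f g := by
  set p := ∏ t, (occ z (z t) : ℝ) / n
  have hweight_nonneg : ∀ g : Fin n → α, 0 ≤ ∏ t, (occ z (g t) : ℝ) / n :=
    fun g => prod_nonneg fun t _ => by positivity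
  have hweight_orbit : ∀ g ∈ permOrbit z, ∏ t, (occ z (g t) : ℝ) / n = p := by
    intro g hg
    obtain ⟨σ, -, rfl⟩ := mem_image.mp hg
    exact Equiv.prod_comp σ fun t => (occ z (z t) : ℝ) / n
  have hcard : (0 : ℝ) < #(permOrbit z) := by
    exact_mod_cast (univ_nonempty.image _).card_pos
  calc (∑ g ∈ permOrbit z, f g) / #(permOrbit z)
      ≤ (Real.exp 1 * (n + 1)) ^ Fintype.card α * #(permOrbit z) * p *
          ((∑ g ∈ permOrbit z, f g) / #(permOrbit z)) :=
        le_mul_of_one_le_left (div_nonneg (sum_nonneg fun g _ => hf g) hcard.le)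
          (one_le_card_permOrbit_mul_prod z)
    _ = (Real.exp 1 * (n + 1)) ^ Fintype.card α * ∑ g ∈ permOrbit z, p * f g := by
        rw [← mul_sum]; field_simp
    _ ≤ (Real.exp 1 * (n + 1)) ^ Fintype.card α * ∑ g, (∏ t, (occ z (g t) : ℝ) / n) * f g := by
        gcongr
        calc ∑ g ∈ permOrbit z, p * f g
            = ∑ g ∈ permOrbit z, (∏ t, (occ z (g t) : ℝ) / n) * f g :=
              sum_congr rfl fun g hg => by rw [hweight_orbit g hg]
          _ ≤ ∑ g, (∏ t, (occ z (g t) : ℝ) / n) * f g :=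
              sum_le_sum_of_subset_of_nonneg (subset_univ _)
                fun g _ _ => mul_nonneg (hweight_nonneg g) (hf g)

end PermOrbit

open Matrix

section TensorPow

variable {d n : ℕ}

lemma tensorPow_mul_tensorPow (A B : Fin n → Matrix (Fin d) (Fin d) ℂ) :
    tensorPow n A * tensorPow n B = tensorPow n fun t => A t * B t := by
  ext i j
  simp only [tensorPow, Matrix.mul_apply, Matrix.of_apply, prod_univ_sum, Fintype.piFinset_univ,
    prod_mul_distrib]

lemma conjTranspose_tensorPow (A : Fin n → Matrix (Fin d) (Fin d) ℂ) :
    (tensorPow n A)ᴴ = tensorPow n fun t => (A t)ᴴ := by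
  ext i j
  simp [tensorPow, star_prod]

open scoped MatrixOrder in
lemma posSemidef_tensorPow {A : Fin n → Matrix (Fin d) (Fin d) ℂ} (hA : ∀ t, (A t).PosSemidef) :
    (tensorPow n A).PosSemidef := by
  choose B hB using fun t => CStarAlgebra.nonneg_iff_eq_star_mul_self.mp (hA t).nonneg
  have : tensorPow n A = (tensorPow n B)ᴴ * tensorPow n B := by
    rw [conjTranspose_tensorPow, tensorPow_mul_tensorPow]
    exact congrArg _ (funext hB)
  rw [this]
  exact Matrix.posSemidef_conjTranspose_mul_self _

lemma tensorPow_sum_smul {β : Type*} [Fintype β] (w : β → ℂ)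
    (M : β → Matrix (Fin d) (Fin d) ℂ) :
    tensorPow n (fun _ => ∑ b, w b • M b) =
      ∑ g : Fin n → β, (∏ t, w (g t)) • tensorPow n fun t => M (g t) := by
  ext i j
  simp only [tensorPow, Matrix.of_apply, Matrix.sum_apply, Matrix.smul_apply, smul_eq_mul,
    prod_univ_sum, Fintype.piFinset_univ, prod_mul_distrib]

lemma re_trace_tensorPow_sum_smul_mul {β : Type*} [Fintype β] (w : β → ℝ)
    (M : β → Matrix (Fin d) (Fin d) ℂ) (B : Matrix (Fin n → Fin d) (Fin n → Fin d) ℂ) :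
    (tensorPow n (fun _ => ∑ b, (w b : ℂ) • M b) * B).trace.re =
      ∑ g : Fin n → β, (∏ t, w (g t)) * (tensorPow n (fun t => M (g t)) * B).trace.re := by
  rw [tensorPow_sum_smul, Matrix.sum_mul, trace_sum, Complex.re_sum]
  refine sum_congr rfl fun g _ => ?_
  rw [Matrix.smul_mul, trace_smul, smul_eq_mul, ← Complex.ofReal_prod, Complex.re_ofReal_mul]

end TensorPow

lemma re_trace_mul_nonneg_of_isHermitian_of_idem {m : Type*} [Fintype m] {A B : Matrix m m ℂ}
    (hA : A.PosSemidef) (hB : B.IsHermitian) (hBB : B * B = B) : 0 ≤ (A * B).trace.re := by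
  have : (A * B).trace = (B * A * Bᴴ).trace := by
    rw [hB.eq, trace_mul_comm (B * A), ← Matrix.mul_assoc, hBB, trace_mul_comm]
  rw [this]
  exact (RCLike.nonneg_iff.mp (hA.mul_mul_conjTranspose_same B).trace_nonneg).1

section EmpiricalChannel

variable {𝒳 𝒮 : Type*} [Fintype 𝒳] [DecidableEq 𝒳] [Fintype 𝒮] [DecidableEq 𝒮] {n : ℕ}

lemma sum_occ_pair (x : Fin n → 𝒳) (s : Fin n → 𝒮) (a : 𝒳) :
    ∑ c, occ (fun t => (x t, s t)) (a, c) = occ x a := by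
  have := sum_card_fiberwise_eq_card_filter {t | x t = a} univ s
  simp only [mem_univ, filter_filter] at this
  simpa [occ, Prod.ext_iff] using this

lemma exists_stochMat_occ_mul_eq [Nonempty 𝒮] (x : Fin n → 𝒳) (s : Fin n → 𝒮) :
    ∃ Q : StochMat 𝒳 𝒮, ∀ a c,
      (occ x a : ℝ) * Q.1 a c = occ (fun t => (x t, s t)) (a, c) := by
  have hsum (a : 𝒳) : ∑ c, (occ (fun t => (x t, s t)) (a, c) : ℝ) = occ x a := by
    exact_mod_cast sum_occ_pair x s a
  refine ⟨⟨fun a c => if occ x a = 0 then (Fintype.card 𝒮 : ℝ)⁻¹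
      else occ (fun t => (x t, s t)) (a, c) / occ x a, ?_, fun a => ?_⟩, fun a c => ?_⟩
  · intro a c
    dsimp only
    split_ifs <;> positivity
  · dsimp only
    split_ifs with ha
    · simp
    · rw [← sum_div, hsum, div_self (by exact_mod_cast ha)]
  · dsimp only
    split_ifs with ha
    · have := (sum_eq_zero_iff_of_nonneg fun c _ => by positivity).mp
        ((hsum a).trans (by exact_mod_cast ha)) c (mem_univ c)
      simp [ha, this]
    · field_simp

lemma sum_smul_avgChannel_eq {d : ℕ} {ρ : 𝒳 → 𝒮 → Matrix (Fin d) (Fin d) ℂ} {P : 𝒳 → ℝ}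
    {x : Fin n → 𝒳} {s : Fin n → 𝒮} (hx : x ∈ typeClass P n) (hn : n ≠ 0) {Q : StochMat 𝒳 𝒮}
    (hQ : ∀ a c, (occ x a : ℝ) * Q.1 a c = occ (fun t => (x t, s t)) (a, c)) :
    ∑ a, (P a : ℂ) • avgChannel ρ Q.1 a =
      ∑ i : 𝒳 × 𝒮, ((occ (fun t => (x t, s t)) i / n : ℝ) : ℂ) • ρ i.1 i.2 := by
  rw [Fintype.sum_prod_type]
  refine sum_congr rfl fun a _ => ?_
  rw [avgChannel, smul_sum]
  refine sum_congr rfl fun c _ => ?_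
  rw [smul_smul, ← hQ, (mem_filter.mp hx).2 a]
  push_cast
  field_simp

end EmpiricalChannel

theorem avg_trace_lt_general
    {𝒳 𝒮 : Type*} [Fintype 𝒳] [DecidableEq 𝒳]
    [Fintype 𝒮] [Nonempty 𝒮] [DecidableEq 𝒮] {d : ℕ}
    (ρ : 𝒳 → 𝒮 → Matrix (Fin d) (Fin d) ℂ) (hρ : ∀ x s, IsDensityOperator (ρ x s))
    (P : 𝒳 → ℝ) :
    ∀ ν > (0 : ℝ), ∀ ξ > (0 : ℝ), ∃ N : ℕ, ∀ n ≥ N,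
      (∀ a : 𝒳, ∃ m : ℕ, (n : ℝ) * P a = m) →
      ∀ Pmat : (Fin n → 𝒳) → Matrix (Fin n → Fin d) (Fin n → Fin d) ℂ,
        -- the family consists of orthogonal projections
        (∀ x' : Fin n → 𝒳, (Pmat x').IsHermitian ∧ Pmat x' * Pmat x' = Pmat x') →
        -- (a) the trace depends only on the joint empirical distribution of (x, x', s)
        (∀ x₁ x₂ x₁' x₂' : Fin n → 𝒳, ∀ s₁ s₂ : Fin n → 𝒮,
          (∀ (a b : 𝒳) (c : 𝒮),
            (Finset.univ.filter fun t => x₁ t = a ∧ x₁' t = b ∧ s₁ t = c).card =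
            (Finset.univ.filter fun t => x₂ t = a ∧ x₂' t = b ∧ s₂ t = c).card) →
          ((tensorPow n (fun t => ρ (x₁ t) (s₁ t)) * Pmat x₁').trace).re =
            ((tensorPow n (fun t => ρ (x₂ t) (s₂ t)) * Pmat x₂').trace).re) →
        -- (b) each averaged i.i.d. state is accepted with probability < 2^{−n(C−ν)}
        (∀ Q : StochMat 𝒳 𝒮, ∀ x' ∈ typeClass P n,
          ((tensorPow n (fun _ => ∑ a, (P a : ℂ) • avgChannel ρ Q.1 a) * Pmat x').trace).re <
            (2 : ℝ) ^ (-(n : ℝ) * (infQHolevo ρ P - ν))) →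
        ∀ x ∈ typeClass P n, ∀ s : Fin n → 𝒮,
          (1 / ((typeClass P n).card : ℝ)) *
              ∑ x' ∈ typeClass P n,
                ((tensorPow n (fun t => ρ (x t) (s t)) * Pmat x').trace).re <
            (2 : ℝ) ^ (-(n : ℝ) * (infQHolevo ρ P - ν - ξ)) := by
  intro ν _ ξ hξ
  obtain ⟨N, hN⟩ := eventually_atTop.mp
    ((eventually_mul_add_one_pow_lt (Real.exp 1) (Fintype.card (𝒳 × 𝒮)) hξ).and
      (eventually_ne_atTop 0))
  refine ⟨N, fun n hn _ Pmat hProj hsymm hiid x hx s => ?_⟩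
  obtain ⟨hpoly, hn0⟩ := hN n hn
  let f (g : Fin n → 𝒳 × 𝒮) (x' : Fin n → 𝒳) : ℝ :=
    (tensorPow n (fun t => ρ (g t).1 (g t).2) * Pmat x').trace.re
  have hf : ∀ g, 0 ≤ f g x := fun g => re_trace_mul_nonneg_of_isHermitian_of_idem
    (posSemidef_tensorPow fun t => (hρ _ _).1) (hProj x).1 (hProj x).2
  have hf_perm (g : Fin n → 𝒳 × 𝒮) x' (σ : Equiv.Perm (Fin n)) : f (g ∘ σ) (x' ∘ σ) = f g x' :=
    hsymm _ _ _ _ _ _ fun a b c => card_equiv σ (by simp)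
  obtain ⟨Q, hQ⟩ := exists_stochMat_occ_mul_eq x s
  have hbound := hiid Q x hx
  rw [sum_smul_avgChannel_eq hx hn0 hQ, re_trace_tensorPow_sum_smul_mul] at hbound
  rw [typeClass_eq_permOrbit hx, one_div, inv_mul_eq_div]
  set z : Fin n → 𝒳 × 𝒮 := fun t => (x t, s t)
  calc (∑ x' ∈ permOrbit x, f z x') / #(permOrbit x)
      = (∑ g ∈ permOrbit z, f g x) / #(permOrbit z) := average_permOrbit_comm f hf_perm z x
    _ ≤ (Real.exp 1 * (n + 1)) ^ Fintype.card (𝒳 × 𝒮) *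
          (2 : ℝ) ^ (-(n : ℝ) * (infQHolevo ρ P - ν)) :=
        (average_permOrbit_le _ _ hf).trans
          (mul_le_mul_of_nonneg_left hbound.le (by positivity))
    _ < (2 : ℝ) ^ ((n : ℝ) * ξ) * (2 : ℝ) ^ (-(n : ℝ) * (infQHolevo ρ P - ν)) := by
        gcongr
    _ = (2 : ℝ) ^ (-(n : ℝ) * (infQHolevo ρ P - ν - ξ)) := by
        rw [← Real.rpow_add two_pos]
        ring_nf

/-- **Averaging a permutation-covariant projector family against the worst state sequence**
(Corollary 1 of the paper).  If the family `{𝒫(x') : x' ∈ 𝒯^n_X}` of projections is such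
that (a) `tr[ρ^{⊗n}(x,s) 𝒫(x')]` depends only on the joint empirical distribution of
`(x, x', s)` and (b) each averaged i.i.d. state is accepted with probability at most
`2^{−n(C−ν)}`, then for every `x ∈ 𝒯^n_X` and `s ∈ 𝒮ⁿ` the average of
`tr[ρ^{⊗n}(x,s) 𝒫(x')]` over a uniformly random `x' ∈ 𝒯^n_X` is less than
`2^{−n(C−ν−ξ)}`, where `C = inf_Q χ(P_X; ρ̄̄_Q)`. -/
theorem avg_trace_lt
    {𝒳 𝒮 : Type*} [Fintype 𝒳] [Nonempty 𝒳] [DecidableEq 𝒳]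
    [Fintype 𝒮] [Nonempty 𝒮] [DecidableEq 𝒮] {d : ℕ}
    (ρ : 𝒳 → 𝒮 → Matrix (Fin d) (Fin d) ℂ) (hρ : ∀ x s, IsDensityOperator (ρ x s))
    (P : 𝒳 → ℝ) (hP0 : ∀ x, 0 ≤ P x) (hP1 : ∑ x, P x = 1)
    (hPrat : ∀ x, ∃ r : ℚ, P x = (r : ℝ)) :
    ∀ ν > (0 : ℝ), ∀ ξ > (0 : ℝ), ∃ N : ℕ, ∀ n ≥ N,
      (∀ a : 𝒳, ∃ m : ℕ, (n : ℝ) * P a = m) →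
      ∀ Pmat : (Fin n → 𝒳) → Matrix (Fin n → Fin d) (Fin n → Fin d) ℂ,
        -- the family consists of orthogonal projections
        (∀ x' : Fin n → 𝒳, (Pmat x').IsHermitian ∧ Pmat x' * Pmat x' = Pmat x') →
        -- (a) the trace depends only on the joint empirical distribution of (x, x', s)
        (∀ x₁ x₂ x₁' x₂' : Fin n → 𝒳, ∀ s₁ s₂ : Fin n → 𝒮,
          (∀ (a b : 𝒳) (c : 𝒮),
            (Finset.univ.filter fun t => x₁ t = a ∧ x₁' t = b ∧ s₁ t = c).card =
            (Finset.univ.filter fun t => x₂ t = a ∧ x₂' t = b ∧ s₂ t = c).card) →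
          ((tensorPow n (fun t => ρ (x₁ t) (s₁ t)) * Pmat x₁').trace).re =
            ((tensorPow n (fun t => ρ (x₂ t) (s₂ t)) * Pmat x₂').trace).re) →
        -- (b) each averaged i.i.d. state is accepted with probability < 2^{−n(C−ν)}
        (∀ Q : StochMat 𝒳 𝒮, ∀ x' ∈ typeClass P n,
          ((tensorPow n (fun _ => ∑ a, (P a : ℂ) • avgChannel ρ Q.1 a) * Pmat x').trace).re <
            (2 : ℝ) ^ (-(n : ℝ) * (infQHolevo ρ P - ν))) →
        ∀ x ∈ typeClass P n, ∀ s : Fin n → 𝒮,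
          (1 / ((typeClass P n).card : ℝ)) *
              ∑ x' ∈ typeClass P n,
                ((tensorPow n (fun t => ρ (x t) (s t)) * Pmat x').trace).re <
            (2 : ℝ) ^ (-(n : ℝ) * (infQHolevo ρ P - ν - ξ)) :=
  avg_trace_lt_general ρ hρ P
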